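/- The category StoneRel — whose objects are Stone spaces (compact Hausdorff totally disconnected spaces) and whose morphisms X → Y are Boolean relations, i.e. relations r ⊆ X × Y such that every fiber r[x] = {y | r(x,y)} is closed in Y and for every clopen U ⊆ Y the set {x ∈ X | r[x] ∩ U ≠ ∅} is clopen in X, with relational composition and equality relations as identities — is equivalent to the opposite of the category of Boolean algebras with morphisms the maps preserving ⊥ and binary ∨; the equivalence sends a Stone space X to its Boolean algebra of clopen subsets and a Boolean relation r : X ⇸ Y to the map Clopens(Y) → Clopens(X), U ↦ {x | r[x] ∩ U ≠ ∅}. -/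

import Mathlib

open CategoryTheory TopologicalSpace

universe u

/-- A bundled Stone space: a compact Hausdorff totally disconnected topological space. -/
structure StoneSp : Type (u + 1) where
  carrier : Type u
  [top : TopologicalSpace carrier]
  [compact : CompactSpace carrier]
  [t2 : T2Space carrier]
  [totallyDisconnected : TotallyDisconnectedSpace carrier]

attribute [instance] StoneSp.top StoneSp.compact StoneSp.t2 StoneSp.totallyDisconnected

instance : CoeSort StoneSp.{u} (Type u) := ⟨StoneSp.carrier⟩

/-- A Boolean relation between topological spaces: every fiber `r[x]` is closed and
`{x | r[x] ∩ U ≠ ∅}` is clopen for every clopen `U`. -/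
def IsBooleanRel {X Y : Type u} [TopologicalSpace X] [TopologicalSpace Y]
    (r : X → Y → Prop) : Prop :=
  (∀ x, IsClosed {y | r x y}) ∧
    ∀ U : Set Y, IsClopen U → IsClopen {x | ∃ y, r x y ∧ y ∈ U}

/-- The category `StoneRel` of Stone spaces and Boolean relations, with relational composition
and equality relations as identities. -/
instance : Category StoneSp.{u} where
  Hom X Y := {r : X → Y → Prop // IsBooleanRel r}
  id X := ⟨fun x y => x = y, fun x => by simpa using isClosed_singleton (x := x),
    fun U hU => by
      have : {x : X | ∃ y, x = y ∧ y ∈ U} = U := by ext x; simp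
      rw [this]; exact hU⟩
  comp {X Y Z} r s := ⟨fun x z => ∃ y, r.1 x y ∧ s.1 y z,
    by
      intro x
      rw [← isOpen_compl_iff, isOpen_iff_forall_mem_open]
      intro z hz
      simp only [Set.mem_compl_iff, Set.mem_setOf_eq] at hz
      have hsep : ∀ i : {y : Y // r.1 x y},
          ∃ V : Set Z, IsClopen V ∧ z ∈ V ∧ V ⊆ {z' | s.1 i.1 z'}ᶜ := by
        intro i
        have hopen : IsOpen {z' | s.1 i.1 z'}ᶜ := (s.2.1 i.1).isOpen_compl
        have hmem : z ∈ {z' | s.1 i.1 z'}ᶜ := fun hc => hz ⟨i.1, i.2, hc⟩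
        exact compact_exists_isClopen_in_isOpen hopen hmem
      choose V hVclopen hzV hVsub using hsep
      have hWopen : ∀ i, IsOpen {y' : Y | ∃ z', s.1 y' z' ∧ z' ∈ V i}ᶜ := fun i =>
        (s.2.2 (V i) (hVclopen i)).compl.isOpen
      have hAcomp : IsCompact {y | r.1 x y} := (r.2.1 x).isCompact
      have hcover : {y | r.1 x y} ⊆ ⋃ i, {y' : Y | ∃ z', s.1 y' z' ∧ z' ∈ V i}ᶜ := by
        intro y hy
        refine Set.mem_iUnion.2 ⟨⟨y, hy⟩, ?_⟩
        rintro ⟨z', hsz', hz'V⟩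
        exact hVsub ⟨y, hy⟩ hz'V hsz'
      obtain ⟨t, ht⟩ := hAcomp.elim_finite_subcover _ hWopen hcover
      refine ⟨⋂ i ∈ t, V i, ?_, ?_, ?_⟩
      · intro u hu
        simp only [Set.mem_compl_iff, Set.mem_setOf_eq]
        rintro ⟨y, hry, hsy⟩
        obtain ⟨i, hit, hyW⟩ := Set.mem_iUnion₂.1 (ht hry)
        exact hyW ⟨u, hsy, Set.mem_iInter₂.1 hu i hit⟩
      · exact isOpen_biInter_finset fun i _ => (hVclopen i).isOpen
      · exact Set.mem_iInter₂.2 fun i _ => hzV i,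
    fun U hU => by
      have hV : IsClopen {y | ∃ z, s.1 y z ∧ z ∈ U} := s.2.2 U hU
      have heq : {x | ∃ z, (∃ y, r.1 x y ∧ s.1 y z) ∧ z ∈ U} =
          {x | ∃ y, r.1 x y ∧ y ∈ {y | ∃ z, s.1 y z ∧ z ∈ U}} := by
        ext x; simp only [Set.mem_setOf_eq]; tauto
      rw [heq]; exact r.2.2 _ hV⟩
  id_comp r := by
    apply Subtype.ext
    funext x y
    apply propext
    show (∃ y', x = y' ∧ r.1 y' y) ↔ r.1 x y
    constructor
    · rintro ⟨y', rfl, h⟩; exact h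
    · intro h; exact ⟨x, rfl, h⟩
  comp_id r := by
    apply Subtype.ext
    funext x y
    apply propext
    show (∃ y', r.1 x y' ∧ y' = y) ↔ r.1 x y
    constructor
    · rintro ⟨y', h, rfl⟩; exact h
    · intro h; exact ⟨y, h, rfl⟩
  assoc r s t := by
    apply Subtype.ext
    funext x w
    apply propext
    show (∃ z, (∃ y, r.1 x y ∧ s.1 y z) ∧ t.1 z w) ↔
      ∃ y, r.1 x y ∧ ∃ z, s.1 y z ∧ t.1 z w
    tauto

/-- A bundled Boolean algebra. -/
structure BoolAlgCat : Type (u + 1) where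
  carrier : Type u
  [str : BooleanAlgebra carrier]

attribute [instance] BoolAlgCat.str

instance : CoeSort BoolAlgCat.{u} (Type u) := ⟨BoolAlgCat.carrier⟩

/-- The category of Boolean algebras with morphisms the maps preserving `⊥` and binary `∨`
("hemimorphisms"). -/
instance : Category BoolAlgCat.{u} where
  Hom A B := SupBotHom A B
  id A := SupBotHom.id A
  comp f g := g.comp f
  id_comp f := SupBotHom.ext fun x => rfl
  comp_id f := SupBotHom.ext fun x => rfl
  assoc f g h := SupBotHom.ext fun x => rfl

/-- The functor `StoneRel ⥤ (Bool_{⊥,∨})ᵒᵖ` sending a Stone space `X` to its Boolean algebra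
of clopen subsets and a Boolean relation `r : X ⇸ Y` to the `⊥`- and `∨`-preserving map
`Clopens Y → Clopens X`, `U ↦ {x | r[x] ∩ U ≠ ∅}`. -/
def stoneRelToBoolOp : StoneSp.{u} ⥤ BoolAlgCat.{u}ᵒᵖ where
  obj X := Opposite.op ⟨Clopens X⟩
  map {X Y} r :=
    Quiver.Hom.op
      (show SupBotHom (Clopens Y) (Clopens X) from
        { toFun := fun U => ⟨{x | ∃ y, r.1 x y ∧ y ∈ (U : Set Y)}, r.2.2 U U.isClopen⟩
          map_sup' := fun U V => by
            apply SetLike.coe_injective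
            ext x
            show (∃ y, r.1 x y ∧ y ∈ ((U ⊔ V : Clopens Y) : Set Y)) ↔ _
            simp only [Clopens.coe_sup, Set.mem_union, Set.mem_union]
            constructor
            · rintro ⟨y, hr, hy | hy⟩
              · exact Or.inl ⟨y, hr, hy⟩
              · exact Or.inr ⟨y, hr, hy⟩
            · rintro (⟨y, hr, hy⟩ | ⟨y, hr, hy⟩)
              · exact ⟨y, hr, Or.inl hy⟩
              · exact ⟨y, hr, Or.inr hy⟩
          map_bot' := by
            apply SetLike.coe_injective
            ext x
            simp [Clopens.coe_bot] })
  map_id X := by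
    apply Quiver.Hom.unop_inj
    apply SupBotHom.ext
    intro U
    apply SetLike.coe_injective
    ext x
    show (∃ y, x = y ∧ y ∈ (U : Set X)) ↔ _
    constructor
    · rintro ⟨y, rfl, hy⟩; exact hy
    · intro hx; exact ⟨x, rfl, hx⟩
  map_comp {X Y Z} r s := by
    apply Quiver.Hom.unop_inj
    apply SupBotHom.ext
    intro U
    apply SetLike.coe_injective
    ext x
    show (∃ z, (∃ y, r.1 x y ∧ s.1 y z) ∧ z ∈ (U : Set Z)) ↔
      ∃ y, r.1 x y ∧ y ∈ {y | ∃ z, s.1 y z ∧ z ∈ (U : Set Z)}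
    simp only [Set.mem_setOf_eq]
    tauto

namespace StoneRelAux

/-! ### Auxiliary lemmas on `Clopens` and `SupBotHom` -/

lemma clopens_coe_finset_sup {X : Type u} [TopologicalSpace X] {ι : Type*} [DecidableEq ι]
    (t : Finset ι) (f : ι → Clopens X) :
    ((t.sup f : Clopens X) : Set X) = ⋃ i ∈ t, (f i : Set X) := by
  induction t using Finset.induction with
  | empty => simp [Clopens.coe_bot]
  | insert _ _ h ih => simp [Finset.sup_insert, Clopens.coe_sup, ih]

lemma supBotHom_finset_sup {α β : Type*} [SemilatticeSup α] [SemilatticeSup β]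
    [OrderBot α] [OrderBot β] (h : SupBotHom α β) {ι : Type*} [DecidableEq ι]
    (t : Finset ι) (f : ι → α) : h (t.sup f) = t.sup (fun i => h (f i)) := by
  induction t using Finset.induction with
  | empty => simpa using map_bot h
  | insert _ _ hmem ih => simp [Finset.sup_insert, map_sup, ih]

lemma supBotHom_mono {α β : Type*} [SemilatticeSup α] [SemilatticeSup β]
    [OrderBot α] [OrderBot β] (h : SupBotHom α β) {a b : α} (hab : a ≤ b) : h a ≤ h b := by
  have : h b = h a ⊔ h b := by rw [← map_sup, sup_eq_right.2 hab]
  rw [this]; exact le_sup_left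

/-! ### The spectrum of a Boolean algebra -/

/-- The property of being a "Boolean-algebra-to-`Bool`" homomorphism. -/
def IsBAHom {A : Type u} [BooleanAlgebra A] (f : A → Bool) : Prop :=
  f ⊥ = false ∧ f ⊤ = true ∧ (∀ a b, f (a ⊔ b) = (f a || f b)) ∧
    (∀ a b, f (a ⊓ b) = (f a && f b))

variable {A : Type u} [BooleanAlgebra A]

lemma IsBAHom.compl {f : A → Bool} (hf : IsBAHom f) (a : A) : f aᶜ = !f a := by
  have h1 : (f a && f aᶜ) = false := by rw [← hf.2.2.2, inf_compl_eq_bot, hf.1]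
  have h2 : (f a || f aᶜ) = true := by rw [← hf.2.2.1, sup_compl_eq_top, hf.2.1]
  cases ha : f a <;> cases hb : f aᶜ <;> simp_all

lemma IsBAHom.mono {f : A → Bool} (hf : IsBAHom f) {a b : A} (hab : a ≤ b)
    (ha : f a = true) : f b = true := by
  have : f (a ⊔ b) = (f a || f b) := hf.2.2.1 a b
  rw [sup_eq_right.2 hab, ha] at this
  simpa using this

lemma IsBAHom.finsetInf {f : A → Bool} (hf : IsBAHom f) {ι : Type*} [DecidableEq ι]
    (t : Finset ι) (g : ι → A) :
    f (t.inf g) = true ↔ ∀ i ∈ t, f (g i) = true := by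
  induction t using Finset.induction with
  | empty => simpa using hf.2.1
  | insert _ _ hmem ih =>
    rw [Finset.inf_insert, hf.2.2.2]
    simp [ih]

lemma IsBAHom.finsetSup {f : A → Bool} (hf : IsBAHom f) {ι : Type*} [DecidableEq ι]
    (t : Finset ι) (g : ι → A) :
    f (t.sup g) = true ↔ ∃ i ∈ t, f (g i) = true := by
  induction t using Finset.induction with
  | empty => simp [hf.1]
  | insert _ _ hmem ih =>
    rw [Finset.sup_insert, hf.2.2.1]
    simp [ih]

/-- The Stone spectrum of a Boolean algebra, as a set of functions to `Bool`. -/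
abbrev Spec (A : Type u) [BooleanAlgebra A] : Type u := {f : A → Bool // IsBAHom f}

lemma isClosed_setOf_isBAHom : IsClosed {f : A → Bool | IsBAHom f} := by
  have hc : ∀ a : A, Continuous fun f : A → Bool => f a := fun a => continuous_apply a
  have hcc : ∀ (a b : A) (op : Bool → Bool → Bool),
      Continuous fun f : A → Bool => op (f a) (f b) := by
    intro a b op
    exact (continuous_of_discreteTopology (f := fun p : Bool × Bool => op p.1 p.2)).comp
      ((hc a).prodMk (hc b))
  have : {f : A → Bool | IsBAHom f} =
      ({f | f ⊥ = false} ∩ {f | f ⊤ = true} ∩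
        (⋂ (a : A) (b : A), {f | f (a ⊔ b) = (f a || f b)}) ∩
        (⋂ (a : A) (b : A), {f | f (a ⊓ b) = (f a && f b)})) := by
    ext f
    simp only [IsBAHom, Set.mem_inter_iff, Set.mem_setOf_eq, Set.mem_iInter]
    tauto
  rw [this]
  refine (((isClosed_eq (hc _) continuous_const).inter
    (isClosed_eq (hc _) continuous_const)).inter
    (isClosed_iInter fun a => isClosed_iInter fun b =>
      isClosed_eq (hc _) (hcc a b (· || ·)))).inter
    (isClosed_iInter fun a => isClosed_iInter fun b =>
      isClosed_eq (hc _) (hcc a b (· && ·)))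

instance : CompactSpace (Spec A) :=
  isCompact_iff_compactSpace.1 (isClosed_setOf_isBAHom.isCompact)

/-- The spectrum as a bundled Stone space. -/
def specObj (A : Type u) [BooleanAlgebra A] : StoneSp.{u} := ⟨Spec A⟩

/-- The basic clopen subset of the spectrum determined by an element of the algebra. -/
def specClopen (a : A) : Clopens (Spec A) :=
  ⟨{f | f.1 a = true}, by
    have : {f : Spec A | f.1 a = true} = (fun f : Spec A => f.1 a) ⁻¹' {true} := by
      ext f; simp
    rw [this]
    exact (isClopen_discrete {true}).preimage ((continuous_apply a).comp continuous_subtype_val)⟩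

lemma mem_specClopen {a : A} {f : Spec A} : f ∈ specClopen a ↔ f.1 a = true := Iff.rfl

open scoped symmDiff in
/-- Existence of a point of the spectrum taking the value `true` at a given nonbottom element;
this is the Boolean prime ideal theorem, proved via maximal ideals of the Boolean ring. -/
lemma exists_spec_true {c : A} (hc : c ≠ ⊥) : ∃ f : Spec A, f.1 c = true := by
  classical
  have hxc : toBoolRing c ≠ (0 : AsBoolRing A) := by
    intro h
    exact hc (by simpa [← toBoolRing_bot (α := A)] using toBoolRing_inj.1 h)
  -- the ideal generated by `1 + toBoolRing c` is proper
  have hIne : Ideal.span {(1 : AsBoolRing A) + toBoolRing c} ≠ ⊤ := by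
    intro h
    have h1 : (1 : AsBoolRing A) ∈ Ideal.span {(1 : AsBoolRing A) + toBoolRing c} :=
      h ▸ Submodule.mem_top
    obtain ⟨v, hv⟩ := Ideal.mem_span_singleton'.1 h1
    have : toBoolRing c = 0 := by
      calc toBoolRing c = toBoolRing c * (v * (1 + toBoolRing c)) := by rw [hv, mul_one]
        _ = v * (toBoolRing c * (1 + toBoolRing c)) := by ring
        _ = 0 := by rw [BooleanRing.mul_one_add_self, mul_zero]
    exact hxc this
  obtain ⟨M, hM, hIM⟩ := Ideal.exists_le_maximal _ hIne
  have h1M : (1 : AsBoolRing A) ∉ M := (Ideal.ne_top_iff_one _).1 hM.ne_top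
  have hcM : toBoolRing c ∉ M := by
    intro h
    have : (1 : AsBoolRing A) ∈ M := by
      have h2 : (1 : AsBoolRing A) + toBoolRing c ∈ M := hIM (Ideal.subset_span rfl)
      have : toBoolRing c + (1 + toBoolRing c) = 1 := by
        rw [add_comm (1 : AsBoolRing A) (toBoolRing c), ← add_assoc, BooleanRing.add_self,
          zero_add]
      rw [← this]
      exact M.add_mem h h2
    exact h1M this
  -- membership facts
  have hsup : ∀ a b : A, toBoolRing (a ⊔ b) ∈ M ↔ toBoolRing a ∈ M ∧ toBoolRing b ∈ M := by
    intro a b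
    constructor
    · intro h
      constructor
      · have ha : toBoolRing a = toBoolRing a * toBoolRing (a ⊔ b) := by
          rw [← toBoolRing_inf, inf_sup_self]
        rw [ha]; exact M.mul_mem_left _ h
      · have hb : toBoolRing b = toBoolRing b * toBoolRing (a ⊔ b) := by
          rw [← toBoolRing_inf, inf_of_le_left le_sup_right]
        rw [hb]; exact M.mul_mem_left _ h
    · rintro ⟨ha, hb⟩
      have : toBoolRing (a ⊔ b) = toBoolRing a + toBoolRing b + toBoolRing a * toBoolRing b := by
        rw [← symmDiff_symmDiff_inf a b, toBoolRing_symmDiff, toBoolRing_symmDiff,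
          toBoolRing_inf]
      rw [this]
      exact M.add_mem (M.add_mem ha hb) (M.mul_mem_right _ ha)
  have hinf : ∀ a b : A, toBoolRing (a ⊓ b) ∈ M ↔ toBoolRing a ∈ M ∨ toBoolRing b ∈ M := by
    intro a b
    rw [toBoolRing_inf]
    constructor
    · exact fun h => hM.isPrime.mem_or_mem h
    · rintro (h | h)
      · exact M.mul_mem_right _ h
      · exact M.mul_mem_left _ h
  refine ⟨⟨fun a => decide (toBoolRing a ∉ M), ?_, ?_, ?_, ?_⟩, ?_⟩
  · simpa using M.zero_mem
  · exact decide_eq_true (by simpa using h1M)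
  · intro a b
    rw [← Bool.decide_or]
    refine decide_eq_decide.2 ?_
    rw [not_iff_comm, hsup a b]
    tauto
  · intro a b
    rw [← Bool.decide_and]
    refine decide_eq_decide.2 ?_
    rw [not_iff_comm, hinf a b]
    tauto
  · simpa using hcM

open scoped symmDiff in
lemma specClopen_injective : Function.Injective (specClopen (A := A)) := by
  intro a b hab
  by_contra hne
  have hsd : a ∆ b ≠ ⊥ := fun h => hne (symmDiff_eq_bot.1 h)
  obtain ⟨f, hf⟩ := exists_spec_true hsd
  have hmemiff : f.1 a = true ↔ f.1 b = true := by
    constructor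
    · intro h; have : f ∈ specClopen a := h
      rw [hab] at this; exact this
    · intro h; have : f ∈ specClopen b := h
      rw [← hab] at this; exact this
  have hxor : f.1 (a ∆ b) = ((f.1 a && !f.1 b) || (f.1 b && !f.1 a)) := by
    rw [symmDiff_def, f.2.2.2.1, sdiff_eq, sdiff_eq, f.2.2.2.2, f.2.2.2.2,
      f.2.compl, f.2.compl]
  rw [hxor] at hf
  cases ha : f.1 a <;> cases hb : f.1 b <;> simp_all

lemma specClopen_le_iff {a b : A} : specClopen a ≤ specClopen b ↔ a ≤ b := by
  constructor
  · intro h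
    have hbot : specClopen (a ⊓ bᶜ) = specClopen (⊥ : A) := by
      apply SetLike.ext
      intro f
      simp only [mem_specClopen, f.2.2.2.2, f.2.compl, f.2.1]
      cases ha : f.1 a
      · simp
      · have hb : f.1 b = true := h (show f ∈ specClopen a from ha)
        simp [hb]
    have : a ⊓ bᶜ = ⊥ := specClopen_injective hbot
    rwa [← sdiff_eq, sdiff_eq_bot_iff] at this
  · intro hab f hf
    exact f.2.mono hab hf

lemma specClopen_surjective : Function.Surjective (specClopen (A := A)) := by
  classical
  intro U
  -- Step 1: each point of `U` has a basic clopen neighborhood inside `U`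
  have step1 : ∀ f : Spec A, f ∈ U → ∃ a : A, f ∈ specClopen a ∧ specClopen a ≤ U := by
    intro f hfU
    have hUopen : IsOpen (U : Set (Spec A)) := U.isClopen.isOpen
    rw [isOpen_induced_iff] at hUopen
    obtain ⟨O, hO, hOeq⟩ := hUopen
    have hfO : f.1 ∈ O := by
      have hfU' : f ∈ (U : Set (Spec A)) := hfU
      rw [← hOeq] at hfU'; exact hfU'
    obtain ⟨I, u, hu, hpi⟩ := isOpen_pi_iff.1 hO f.1 hfO
    refine ⟨I.inf (fun i => if f.1 i = true then i else iᶜ), ?_, ?_⟩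
    · rw [mem_specClopen, f.2.finsetInf]
      intro i hi
      by_cases hfi : f.1 i = true
      · simp [hfi]
      · rw [if_neg hfi, f.2.compl, Bool.eq_false_iff.2 hfi]
        simp
    · intro g hg
      have hg : ∀ i ∈ I, g.1 (if f.1 i = true then i else iᶜ) = true :=
        (g.2.finsetInf I _).1 hg
      have hgf : ∀ i ∈ I, g.1 i = f.1 i := by
        intro i hi
        have := hg i hi
        by_cases hfi : f.1 i = true
        · rw [hfi]; simpa [hfi] using this
        · rw [if_neg hfi, g.2.compl] at this
          rw [Bool.eq_false_iff.2 hfi]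
          simpa using this
      have : g.1 ∈ (I : Set A).pi u := by
        intro i hi
        rw [hgf i hi]
        exact (hu i hi).2
      have hgO : g.1 ∈ O := hpi this
      show g ∈ (U : Set (Spec A))
      rw [← hOeq]
      exact hgO
  -- Step 2: compactness gives a finite cover
  choose! a ha₁ ha₂ using step1
  have hUcomp : IsCompact (U : Set (Spec A)) := U.isClopen.isClosed.isCompact
  have hcover : (U : Set (Spec A)) ⊆
      ⋃ f ∈ {g : Spec A | g ∈ U}, ((specClopen (a f) : Clopens (Spec A)) : Set (Spec A)) := by
    intro f hf
    exact Set.mem_biUnion hf (ha₁ f hf)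
  obtain ⟨t, htsub, htfin, htcov⟩ := hUcomp.elim_finite_subcover_image
    (fun f _ => (specClopen (a f)).isClopen.isOpen) hcover
  refine ⟨htfin.toFinset.sup a, ?_⟩
  apply SetLike.ext
  intro g
  rw [mem_specClopen, g.2.finsetSup]
  constructor
  · rintro ⟨i, hi, hgi⟩
    exact ha₂ i (htsub (htfin.mem_toFinset.1 hi)) hgi
  · intro hgU
    obtain ⟨i, hi, hgi⟩ := Set.mem_iUnion₂.1 (htcov hgU)
    exact ⟨i, htfin.mem_toFinset.2 hi, hgi⟩

/-- The Stone representation: a Boolean algebra is order-isomorphic to the clopens of its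
spectrum. -/
noncomputable def specOrderIso (A : Type u) [BooleanAlgebra A] : A ≃o Clopens (Spec A) where
  toEquiv := Equiv.ofBijective _ ⟨specClopen_injective, specClopen_surjective⟩
  map_rel_iff' := specClopen_le_iff

end StoneRelAux

open StoneRelAux

instance : stoneRelToBoolOp.{u}.EssSurj := by
  constructor
  intro B
  letI : BooleanAlgebra B.unop.carrier := B.unop.str
  let e := specOrderIso B.unop.carrier
  let hom : SupBotHom B.unop.carrier (Clopens (Spec B.unop.carrier)) :=
    ⟨⟨e, fun a b => e.map_sup a b⟩, e.map_bot⟩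
  let inv : SupBotHom (Clopens (Spec B.unop.carrier)) B.unop.carrier :=
    ⟨⟨e.symm, fun a b => e.symm.map_sup a b⟩, e.symm.map_bot⟩
  let iso : B.unop ≅ (⟨Clopens (Spec B.unop.carrier)⟩ : BoolAlgCat.{u}) :=
    { hom := hom
      inv := inv
      hom_inv_id := SupBotHom.ext fun x => e.symm_apply_apply x
      inv_hom_id := SupBotHom.ext fun x => e.apply_symm_apply x }
  exact ⟨specObj B.unop.carrier, ⟨iso.op⟩⟩

instance : stoneRelToBoolOp.{u}.Faithful := by
  constructor
  intro X Y r s h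
  have h' := congrArg Quiver.Hom.unop h
  have hU : ∀ U : Clopens Y,
      {x : X | ∃ y, r.1 x y ∧ y ∈ (U : Set Y)} = {x : X | ∃ y, s.1 x y ∧ y ∈ (U : Set Y)} := by
    intro U
    have := congrArg (fun (k : SupBotHom (Clopens Y) (Clopens X)) => ((k U : Clopens X) : Set X)) h'
    exact this
  have key : ∀ (r' s' : X ⟶ Y),
      (∀ U : Clopens Y, {x : X | ∃ y, r'.1 x y ∧ y ∈ (U : Set Y)} ⊆
        {x : X | ∃ y, s'.1 x y ∧ y ∈ (U : Set Y)}) →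
      ∀ x y, r'.1 x y → s'.1 x y := by
    intro r' s' hsub x y hr
    by_contra hs
    have hopen : IsOpen {y' : Y | s'.1 x y'}ᶜ := (s'.2.1 x).isOpen_compl
    have hmem : y ∈ {y' : Y | s'.1 x y'}ᶜ := hs
    obtain ⟨V, hVclopen, hyV, hVsub⟩ := compact_exists_isClopen_in_isOpen hopen hmem
    have hx : x ∈ {x' : X | ∃ y', r'.1 x' y' ∧ y' ∈ ((⟨V, hVclopen⟩ : Clopens Y) : Set Y)} :=
      ⟨y, hr, hyV⟩
    obtain ⟨y', hy's, hy'V⟩ := hsub _ hx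
    exact hVsub hy'V hy's
  apply Subtype.ext
  funext x y
  apply propext
  exact ⟨fun hr => key r s (fun U => (hU U).le) x y hr,
    fun hs => key s r (fun U => (hU U).ge) x y hs⟩

instance : stoneRelToBoolOp.{u}.Full := by
  constructor
  intro X Y f
  classical
  let h : SupBotHom (Clopens Y) (Clopens X) := f.unop
  let rel : X → Y → Prop := fun x y => ∀ U : Clopens Y, y ∈ (U : Set Y) → x ∈ (h U : Set X)
  -- the key identity
  have key : ∀ U : Clopens Y, {x : X | ∃ y, rel x y ∧ y ∈ (U : Set Y)} = (h U : Set X) := by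
    intro U
    apply Set.Subset.antisymm
    · rintro x ⟨y, hry, hyU⟩
      exact hry U hyU
    · intro x hx
      -- find y ∈ U with rel x y by compactness
      have hne : ((U : Set Y) ∩ ⋂ i : {W : Clopens Y // x ∉ (h W : Set X)},
          ((i.1 : Set Y))ᶜ).Nonempty := by
        by_contra hemp
        rw [Set.not_nonempty_iff_eq_empty] at hemp
        have hUcomp : IsCompact (U : Set Y) := U.isClopen.isClosed.isCompact
        obtain ⟨t, ht⟩ := hUcomp.elim_finite_subfamily_closed
          (fun i : {W : Clopens Y // x ∉ (h W : Set X)} => ((i.1 : Set Y))ᶜ)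
          (fun i => i.1.isClopen.isOpen.isClosed_compl) hemp
        have hle : U ≤ t.sup (fun i => i.1) := by
          intro y hyU
          by_contra hynot
          have : y ∈ (U : Set Y) ∩ ⋂ i ∈ t, ((i.1 : Set Y))ᶜ := by
            refine ⟨hyU, Set.mem_iInter₂.2 fun i hi => ?_⟩
            intro hyi
            apply hynot
            have : ((t.sup (fun i => i.1) : Clopens Y) : Set Y) = ⋃ i ∈ t, (i.1 : Set Y) :=
              clopens_coe_finset_sup t _
            show y ∈ ((t.sup (fun i => i.1) : Clopens Y) : Set Y)
            rw [this]
            exact Set.mem_biUnion hi hyi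
          rw [ht] at this
          exact this
        have hxsup : x ∈ (h (t.sup (fun i => i.1)) : Set X) := supBotHom_mono h hle hx
        rw [supBotHom_finset_sup] at hxsup
        have : ((t.sup (fun i => h i.1) : Clopens X) : Set X) = ⋃ i ∈ t, ((h i.1 : Clopens X) : Set X) :=
          clopens_coe_finset_sup t _
        rw [show (t.sup fun i => h i.1) = t.sup (fun i => h i.1) from rfl] at hxsup
        have hxmem : x ∈ ⋃ i ∈ t, ((h i.1 : Clopens X) : Set X) := by
          rw [← this]; exact hxsup
        obtain ⟨i, _, hxi⟩ := Set.mem_iUnion₂.1 hxmem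
        exact i.2 hxi
      obtain ⟨y, hyU, hyI⟩ := hne
      refine ⟨y, ?_, hyU⟩
      intro W hyW
      by_contra hxW
      have := Set.mem_iInter.1 hyI ⟨W, hxW⟩
      exact this hyW
  have hrel : IsBooleanRel rel := by
    constructor
    · intro x
      have : {y : Y | rel x y} =
          ⋂ i : {W : Clopens Y // x ∉ (h W : Set X)}, ((i.1 : Set Y))ᶜ := by
        ext y
        simp only [Set.mem_setOf_eq, Set.mem_iInter, Set.mem_compl_iff]
        constructor
        · intro hr i hyi
          exact i.2 (hr i.1 hyi)
        · intro hall W hyW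
          by_contra hxW
          exact hall ⟨W, hxW⟩ hyW
      rw [this]
      exact isClosed_iInter fun i => i.1.isClopen.isOpen.isClosed_compl
    · intro U hU
      have := key ⟨U, hU⟩
      rw [show {x : X | ∃ y, rel x y ∧ y ∈ U} =
        {x : X | ∃ y, rel x y ∧ y ∈ ((⟨U, hU⟩ : Clopens Y) : Set Y)} from rfl, this]
      exact (h ⟨U, hU⟩).isClopen
  refine ⟨⟨rel, hrel⟩, ?_⟩
  apply Quiver.Hom.unop_inj
  apply SupBotHom.ext
  intro U
  apply SetLike.coe_injective (A := Clopens X.carrier)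
  exact key U

/-- The category of Stone spaces and Boolean relations is equivalent to the opposite of the
category of Boolean algebras and maps preserving `⊥` and binary `∨`, via the functor sending
`X` to `Clopens X` and `r : X ⇸ Y` to `U ↦ {x | r[x] ∩ U ≠ ∅}`. -/
theorem stoneRel_equiv_boolSupBotOp : stoneRelToBoolOp.{u}.IsEquivalence := {}
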